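/- Let n ≥ 1 and let E = EuclideanSpace ℝ (Fin n). The semigroup of star partial homeomorphisms of E is simple: for any two star partial homeomorphisms α and β of E there exist star partial homeomorphisms γ and δ with α ≈ (γ.trans β).trans δ, i.e. every element lies in the two-sided principal ideal generated by any other element. -/

import Mathlib

noncomputable def radial {n : ℕ} (L : Set (EuclideanSpace ℝ (Fin n)))
    (u : EuclideanSpace ℝ (Fin n)) : ℝ :=
  sSup {c : ℝ | 0 ≤ c ∧ c • u ∈ L}

def IsStar {n : ℕ} (L : Set (EuclideanSpace ℝ (Fin n))) : Prop :=
  IsCompact L ∧ (0 : EuclideanSpace ℝ (Fin n)) ∈ interior L ∧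
    (∀ x ∈ L, segment ℝ 0 x ⊆ L) ∧
    ContinuousOn (radial L) (Metric.sphere (0 : EuclideanSpace ℝ (Fin n)) 1)

def IsStarPartialHomeo {n : ℕ}
    (α : PartialEquiv (EuclideanSpace ℝ (Fin n)) (EuclideanSpace ℝ (Fin n))) : Prop :=
  IsStar α.source ∧ IsStar α.target ∧
    ContinuousOn α α.source ∧ ContinuousOn α.symm α.target ∧
    α 0 = 0 ∧ ∀ x ∈ α.source, α '' (segment ℝ 0 x) = segment ℝ 0 (α x)

section Radial
variable {n : ℕ} {L : Set (EuclideanSpace ℝ (Fin n))} {u : EuclideanSpace ℝ (Fin n)}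

lemma smul_mem_segment_zero {x : EuclideanSpace ℝ (Fin n)} {t : ℝ} (h0 : 0 ≤ t) (h1 : t ≤ 1) :
    t • x ∈ segment ℝ 0 x :=
  ⟨1 - t, t, by linarith, h0, by ring, by simp⟩

lemma segment_zero_eq_image (x : EuclideanSpace ℝ (Fin n)) :
    segment ℝ 0 x = (fun t : ℝ => t • x) '' Set.Icc 0 1 := by
  rw [segment_eq_image ℝ 0 x]
  simp

lemma radialSet_compact (hL : IsStar L) (hu : ‖u‖ = 1) :
    IsCompact {c : ℝ | 0 ≤ c ∧ c • u ∈ L} := by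
  obtain ⟨R, hR⟩ := hL.1.isBounded.subset_closedBall 0
  rw [Metric.isCompact_iff_isClosed_bounded]
  constructor
  · exact (isClosed_Ici.preimage continuous_id').inter
      (hL.1.isClosed.preimage (continuous_id.smul continuous_const))
  · apply Bornology.IsBounded.subset (Metric.isBounded_Icc 0 R)
    rintro c ⟨hc0, hcL⟩
    have := hR hcL
    simp [Metric.mem_closedBall, norm_smul, hu, abs_of_nonneg hc0] at this
    exact ⟨hc0, this⟩

lemma radialSet_nonempty (hL : IsStar L) : ({c : ℝ | 0 ≤ c ∧ c • u ∈ L}).Nonempty :=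
  ⟨0, le_refl 0, by simpa using interior_subset hL.2.1⟩

lemma radial_smul_mem (hL : IsStar L) (hu : ‖u‖ = 1) : radial L u • u ∈ L :=
  ((radialSet_compact hL hu).sSup_mem (radialSet_nonempty hL)).2

lemma le_radial_of_mem (hL : IsStar L) (hu : ‖u‖ = 1) {c : ℝ} (hc : 0 ≤ c) (h : c • u ∈ L) :
    c ≤ radial L u :=
  le_csSup (radialSet_compact hL hu).bddAbove ⟨hc, h⟩

lemma radial_pos (hL : IsStar L) (hu : ‖u‖ = 1) : 0 < radial L u := by
  obtain ⟨ε, hε, hball⟩ := Metric.mem_nhds_iff.1 (mem_interior_iff_mem_nhds.1 hL.2.1)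
  have h2 : (ε/2) • u ∈ L := by
    apply hball
    simp [Metric.mem_ball, norm_smul, hu, abs_of_nonneg (le_of_lt (half_pos hε))]
    rw [abs_of_nonneg hε.le]
    linarith
  linarith [le_radial_of_mem hL hu (le_of_lt (half_pos hε)) h2]

lemma smul_mem_of_le_radial (hL : IsStar L) (hu : ‖u‖ = 1) {c : ℝ} (hc : 0 ≤ c)
    (h : c ≤ radial L u) : c • u ∈ L := by
  have hρ := radial_pos hL hu
  have : c • u = (c / radial L u) • (radial L u • u) := by
    rw [smul_smul, div_mul_cancel₀ _ (ne_of_gt hρ)]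
  rw [this]
  exact hL.2.2.1 _ (radial_smul_mem hL hu)
    (smul_mem_segment_zero (div_nonneg hc hρ.le) (div_le_one_of_le₀ h hρ.le))

lemma norm_unit {x : EuclideanSpace ℝ (Fin n)} (hx : x ≠ 0) : ‖‖x‖⁻¹ • x‖ = 1 := by
  rw [norm_smul, norm_inv, norm_norm, inv_mul_cancel₀ (norm_ne_zero_iff.2 hx)]

lemma mem_star_iff (hL : IsStar L) {x : EuclideanSpace ℝ (Fin n)} (hx : x ≠ 0) :
    x ∈ L ↔ ‖x‖ ≤ radial L (‖x‖⁻¹ • x) := by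
  have hu : ‖‖x‖⁻¹ • x‖ = 1 := norm_unit hx
  have hxx : ‖x‖ • (‖x‖⁻¹ • x) = x := by
    rw [smul_smul, mul_inv_cancel₀ (norm_ne_zero_iff.2 hx), one_smul]
  constructor
  · intro h
    exact le_radial_of_mem hL hu (norm_nonneg x) (by rwa [hxx])
  · intro h
    have := smul_mem_of_le_radial hL hu (norm_nonneg x) h
    rwa [hxx] at this

end Radial

section RatioMap
variable {n : ℕ}

open Classical in
/-- The radial rescaling map sending the star `L` onto the star `M`. -/
noncomputable def ratioMap (L M : Set (EuclideanSpace ℝ (Fin n)))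
    (x : EuclideanSpace ℝ (Fin n)) : EuclideanSpace ℝ (Fin n) :=
  if x = 0 then 0 else (radial M (‖x‖⁻¹ • x) / radial L (‖x‖⁻¹ • x)) • x

variable {L M : Set (EuclideanSpace ℝ (Fin n))}

lemma ratioMap_zero (L M : Set (EuclideanSpace ℝ (Fin n))) : ratioMap L M 0 = 0 := by
  simp [ratioMap]

lemma ratioMap_apply (L M : Set (EuclideanSpace ℝ (Fin n))) {x : EuclideanSpace ℝ (Fin n)}
    (hx : x ≠ 0) :
    ratioMap L M x = (radial M (‖x‖⁻¹ • x) / radial L (‖x‖⁻¹ • x)) • x := by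
  simp [ratioMap, hx]

lemma unit_smul_pos {k : ℝ} (hk : 0 < k) {x : EuclideanSpace ℝ (Fin n)} (hx : x ≠ 0) :
    ‖k • x‖⁻¹ • (k • x) = ‖x‖⁻¹ • x := by
  have hxn : ‖x‖ ≠ 0 := norm_ne_zero_iff.2 hx
  rw [norm_smul, Real.norm_eq_abs, abs_of_pos hk, smul_smul]
  congr 1
  rw [mul_inv, mul_comm k⁻¹, mul_assoc, inv_mul_cancel₀ hk.ne', mul_one]

lemma ratioMap_ne_zero (hL : IsStar L) (hM : IsStar M) {x : EuclideanSpace ℝ (Fin n)}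
    (hx : x ≠ 0) : ratioMap L M x ≠ 0 := by
  rw [ratioMap_apply L M hx]
  have h1 := radial_pos hM (norm_unit hx)
  have h2 := radial_pos hL (norm_unit hx)
  exact smul_ne_zero (ne_of_gt (div_pos h1 h2)) hx

lemma ratioMap_smul (L M : Set (EuclideanSpace ℝ (Fin n))) {t : ℝ} (ht : 0 ≤ t)
    (x : EuclideanSpace ℝ (Fin n)) : ratioMap L M (t • x) = t • ratioMap L M x := by
  rcases eq_or_lt_of_le ht with rfl | ht
  · simp [ratioMap_zero]
  rcases eq_or_ne x 0 with rfl | hx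
  · simp [ratioMap_zero]
  have htx : t • x ≠ 0 := smul_ne_zero (ne_of_gt ht) hx
  rw [ratioMap_apply L M htx, ratioMap_apply L M hx, unit_smul_pos ht hx, smul_comm]

lemma ratioMap_invol (hL : IsStar L) (hM : IsStar M) (x : EuclideanSpace ℝ (Fin n)) :
    ratioMap M L (ratioMap L M x) = x := by
  rcases eq_or_ne x 0 with rfl | hx
  · simp [ratioMap_zero]
  have h1 := radial_pos hM (norm_unit hx)
  have h2 := radial_pos hL (norm_unit hx)
  have hkpos : 0 < radial M (‖x‖⁻¹ • x) / radial L (‖x‖⁻¹ • x) := div_pos h1 h2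
  have hy : ratioMap L M x = (radial M (‖x‖⁻¹ • x) / radial L (‖x‖⁻¹ • x)) • x :=
    ratioMap_apply L M hx
  have hyne : ratioMap L M x ≠ 0 := ratioMap_ne_zero hL hM hx
  rw [hy] at hyne
  rw [hy, ratioMap_apply M L hyne, unit_smul_pos hkpos hx, smul_smul]
  have : radial L (‖x‖⁻¹ • x) / radial M (‖x‖⁻¹ • x) *
      (radial M (‖x‖⁻¹ • x) / radial L (‖x‖⁻¹ • x)) = 1 := by
    rw [div_mul_div_comm, mul_comm (radial L (‖x‖⁻¹ • x))]
    exact div_self (by positivity)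
  rw [this, one_smul]

lemma ratioMap_mapsTo (hL : IsStar L) (hM : IsStar M) : Set.MapsTo (ratioMap L M) L M := by
  intro x hxL
  rcases eq_or_ne x 0 with rfl | hx
  · simpa [ratioMap_zero] using interior_subset hM.2.1
  have hu : ‖‖x‖⁻¹ • x‖ = 1 := norm_unit hx
  have h1 := radial_pos hM hu
  have h2 := radial_pos hL hu
  have hxle : ‖x‖ ≤ radial L (‖x‖⁻¹ • x) := (mem_star_iff hL hx).1 hxL
  have hyne : ratioMap L M x ≠ 0 := ratioMap_ne_zero hL hM hx
  rw [mem_star_iff hM hyne]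
  have hy : ratioMap L M x = (radial M (‖x‖⁻¹ • x) / radial L (‖x‖⁻¹ • x)) • x :=
    ratioMap_apply L M hx
  have hk : (0:ℝ) < radial M (‖x‖⁻¹ • x) / radial L (‖x‖⁻¹ • x) := div_pos h1 h2
  rw [hy, unit_smul_pos hk hx, norm_smul, Real.norm_eq_abs, abs_of_pos hk, div_mul_comm]
  calc ‖x‖ / radial L (‖x‖⁻¹ • x) * radial M (‖x‖⁻¹ • x)
      ≤ 1 * radial M (‖x‖⁻¹ • x) := by
        apply mul_le_mul_of_nonneg_right _ h1.le
        exact div_le_one_of_le₀ hxle h2.le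
    _ = radial M (‖x‖⁻¹ • x) := one_mul _

end RatioMap

section Cont
variable {n : ℕ} {L M : Set (EuclideanSpace ℝ (Fin n))}

lemma unitMap_continuousOn :
    ContinuousOn (fun x : EuclideanSpace ℝ (Fin n) => ‖x‖⁻¹ • x)
      {x : EuclideanSpace ℝ (Fin n) | x ≠ 0} := by
  exact ((continuous_norm.continuousOn).inv₀ fun x hx => norm_ne_zero_iff.2 hx).smul continuous_id.continuousOn

lemma unitMap_mapsTo :
    Set.MapsTo (fun x : EuclideanSpace ℝ (Fin n) => ‖x‖⁻¹ • x)
      {x : EuclideanSpace ℝ (Fin n) | x ≠ 0}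
      (Metric.sphere (0 : EuclideanSpace ℝ (Fin n)) 1) := fun x hx => by
  simpa [mem_sphere_zero_iff_norm] using norm_unit hx

lemma ratio_continuousOn (hL : IsStar L) (hM : IsStar M) :
    ContinuousOn (fun u => radial M u / radial L u)
      (Metric.sphere (0 : EuclideanSpace ℝ (Fin n)) 1) := by
  apply hM.2.2.2.div hL.2.2.2
  intro u hu
  exact (radial_pos hL (by simpa [mem_sphere_zero_iff_norm] using hu)).ne'

lemma ratioMap_continuousOn_ne (hL : IsStar L) (hM : IsStar M) :
    ContinuousOn (ratioMap L M) {x : EuclideanSpace ℝ (Fin n) | x ≠ 0} := by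
  have h1 : ContinuousOn
      (fun x : EuclideanSpace ℝ (Fin n) =>
        (radial M (‖x‖⁻¹ • x) / radial L (‖x‖⁻¹ • x)) • x)
      {x : EuclideanSpace ℝ (Fin n) | x ≠ 0} := by
    exact ((ratio_continuousOn hL hM).comp unitMap_continuousOn unitMap_mapsTo).smul continuous_id.continuousOn
  exact h1.congr fun x hx => ratioMap_apply L M hx

lemma ratioMap_norm_bound (hL : IsStar L) (hM : IsStar M) :
    ∃ C : ℝ, ∀ x : EuclideanSpace ℝ (Fin n), ‖ratioMap L M x‖ ≤ C * ‖x‖ := by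
  obtain ⟨C, hC⟩ := (isCompact_sphere (0 : EuclideanSpace ℝ (Fin n)) 1).exists_bound_of_continuousOn
    (ratio_continuousOn hL hM)
  refine ⟨C, fun x => ?_⟩
  rcases eq_or_ne x 0 with rfl | hx
  · simp [ratioMap_zero]
  rw [ratioMap_apply L M hx, norm_smul, Real.norm_eq_abs]
  apply mul_le_mul_of_nonneg_right _ (norm_nonneg x)
  have := hC (‖x‖⁻¹ • x) (by simpa [mem_sphere_zero_iff_norm] using norm_unit hx)
  calc |radial M (‖x‖⁻¹ • x) / radial L (‖x‖⁻¹ • x)|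
      = ‖radial M (‖x‖⁻¹ • x) / radial L (‖x‖⁻¹ • x)‖ := rfl
    _ ≤ C := this

lemma ratioMap_continuousOn (hL : IsStar L) (hM : IsStar M) :
    ContinuousOn (ratioMap L M) L := by
  intro x hxL
  rcases eq_or_ne x 0 with rfl | hx
  · obtain ⟨C, hC⟩ := ratioMap_norm_bound hL hM
    have : Filter.Tendsto (ratioMap L M) (nhdsWithin 0 L) (nhds 0) := by
      apply squeeze_zero_norm (fun x => hC x)
      have h2 : Filter.Tendsto (fun x : EuclideanSpace ℝ (Fin n) => C * ‖x‖)
          (nhds 0) (nhds (C * ‖(0 : EuclideanSpace ℝ (Fin n))‖)) :=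
        ((continuous_const.mul continuous_norm).tendsto (0 : EuclideanSpace ℝ (Fin n)))
      simp only [norm_zero, mul_zero] at h2
      exact h2.mono_left nhdsWithin_le_nhds
    rw [ContinuousWithinAt, ratioMap_zero]
    exact this
  · exact ((ratioMap_continuousOn_ne hL hM).continuousAt
      (isOpen_ne.mem_nhds hx)).continuousWithinAt

end Cont

section Main
variable {n : ℕ} {L M : Set (EuclideanSpace ℝ (Fin n))}
variable {α β : PartialEquiv (EuclideanSpace ℝ (Fin n)) (EuclideanSpace ℝ (Fin n))}

/-- The star partial homeomorphism between two stars given by radial rescaling. -/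
noncomputable def starPE (hL : IsStar L) (hM : IsStar M) :
    PartialEquiv (EuclideanSpace ℝ (Fin n)) (EuclideanSpace ℝ (Fin n)) where
  toFun := ratioMap L M
  invFun := ratioMap M L
  source := L
  target := M
  map_source' := ratioMap_mapsTo hL hM
  map_target' := ratioMap_mapsTo hM hL
  left_inv' := fun x _ => ratioMap_invol hL hM x
  right_inv' := fun x _ => ratioMap_invol hM hL x

lemma ratioMap_image_segment (L M : Set (EuclideanSpace ℝ (Fin n)))
    (x : EuclideanSpace ℝ (Fin n)) :
    ratioMap L M '' segment ℝ 0 x = segment ℝ 0 (ratioMap L M x) := by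
  rw [segment_zero_eq_image (ratioMap L M x), segment_zero_eq_image x, ← Set.image_comp]
  exact Set.image_congr fun t ht => ratioMap_smul L M ht.1 x

lemma starPE_isStarPartialHomeo (hL : IsStar L) (hM : IsStar M) :
    IsStarPartialHomeo (starPE hL hM) :=
  ⟨hL, hM, ratioMap_continuousOn hL hM, ratioMap_continuousOn hM hL,
    ratioMap_zero L M, fun x _ => ratioMap_image_segment L M x⟩

lemma IsStarPartialHomeo.symm (h : IsStarPartialHomeo α) : IsStarPartialHomeo α.symm := by
  obtain ⟨hs, ht, hc, hc', h0, hseg⟩ := h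
  refine ⟨ht, hs, hc', hc, ?_, ?_⟩
  · have h0s : (0 : EuclideanSpace ℝ (Fin n)) ∈ α.source := interior_subset hs.2.1
    have := α.left_inv h0s
    rw [h0] at this
    exact this
  · intro y hy
    obtain ⟨x, hx, rfl⟩ : ∃ x ∈ α.source, α x = y :=
      ⟨α.symm y, α.map_target hy, α.right_inv hy⟩
    have hsub : segment ℝ 0 x ⊆ α.source := hs.2.2.1 x hx
    rw [← hseg x hx, ← Set.image_comp]
    have heq : Set.EqOn (α.symm ∘ α) id (segment ℝ 0 x) := fun z hz => α.left_inv (hsub hz)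
    rw [Set.image_congr heq, Set.image_id, α.left_inv hx]

lemma trans_source_eq (h : α.target = β.source) : (α.trans β).source = α.source := by
  rw [PartialEquiv.trans_source, Set.inter_eq_left]
  exact fun x hx => Set.mem_preimage.2 (h ▸ α.map_source hx)

lemma trans_target_eq (h : α.target = β.source) : (α.trans β).target = β.target := by
  rw [PartialEquiv.trans_target, Set.inter_eq_left]
  exact fun y hy => Set.mem_preimage.2 (h ▸ β.map_target hy)

lemma IsStarPartialHomeo.trans (hα : IsStarPartialHomeo α) (hβ : IsStarPartialHomeo β)
    (h : α.target = β.source) : IsStarPartialHomeo (α.trans β) := by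
  have hmaps : Set.MapsTo α α.source β.source := fun x hx => h ▸ α.map_source hx
  have hmaps' : Set.MapsTo α.symm α.target α.source := fun y hy => α.map_target hy
  have hmapsβ : Set.MapsTo β.symm β.target α.target := fun y hy => h ▸ β.map_target hy
  refine ⟨?_, ?_, ?_, ?_, ?_, ?_⟩
  · rw [trans_source_eq h]; exact hα.1
  · rw [trans_target_eq h]; exact hβ.2.1
  · rw [trans_source_eq h, PartialEquiv.coe_trans]
    exact hβ.2.2.1.comp hα.2.2.1 hmaps
  · rw [trans_target_eq h, PartialEquiv.coe_trans_symm]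
    exact hα.2.2.2.1.comp hβ.2.2.2.1 hmapsβ
  · rw [PartialEquiv.trans_apply, hα.2.2.2.2.1, hβ.2.2.2.2.1]
  · intro x hx
    rw [trans_source_eq h] at hx
    have hgoal : (β : EuclideanSpace ℝ (Fin n) → EuclideanSpace ℝ (Fin n)) ∘ (α : EuclideanSpace ℝ (Fin n) → EuclideanSpace ℝ (Fin n)) '' segment ℝ 0 x = segment ℝ 0 (β (α x)) := by
      rw [Set.image_comp, hα.2.2.2.2.2 x hx, hβ.2.2.2.2.2 (α x) (hmaps hx)]
    exact hgoal

theorem stmt_13 (n : ℕ) (hn : 1 ≤ n)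
    (α β : PartialEquiv (EuclideanSpace ℝ (Fin n)) (EuclideanSpace ℝ (Fin n)))
    (hα : IsStarPartialHomeo α) (hβ : IsStarPartialHomeo β) :
    ∃ γ δ : PartialEquiv (EuclideanSpace ℝ (Fin n)) (EuclideanSpace ℝ (Fin n)),
      IsStarPartialHomeo γ ∧ IsStarPartialHomeo δ ∧
      α ≈ (γ.trans β).trans δ := by
  set γ0 := starPE hα.1 hβ.1 with hγ0def
  have hγ0 : IsStarPartialHomeo γ0 := starPE_isStarPartialHomeo hα.1 hβ.1
  have hcond1 : γ0.target = β.source := rfl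
  have hε : IsStarPartialHomeo (γ0.trans β) := hγ0.trans hβ hcond1
  have hεsource : (γ0.trans β).source = α.source := trans_source_eq hcond1
  have hcond2 : (γ0.trans β).symm.target = α.source := hεsource
  have hδ : IsStarPartialHomeo ((γ0.trans β).symm.trans α) := hε.symm.trans hα hcond2
  refine ⟨γ0, (γ0.trans β).symm.trans α, hγ0, hδ, ?_, ?_⟩
  · -- source equality
    rw [trans_source_eq ((trans_source_eq hcond2).symm : (γ0.trans β).target = _), hεsource]
  · -- EqOn
    intro x hx
    have hx' : x ∈ (γ0.trans β).source := hεsource ▸ hx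
    have hli := (γ0.trans β).left_inv hx'
    simp only [PartialEquiv.trans_apply] at hli ⊢
    rw [hli]

end Main
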